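/- arXiv:2111.03223 — 4 statements merged into one kernel-verified Lean document; each statement's English description precedes it below -/
import Mathlib

section
/- Let τ_1 < τ_2 < τ_3 < τ_4 be any four distinct quantile levels in (0,1) (more generally K ≥ 4 distinct levels τ_1 < … < τ_K in (0,1)). If two Tukey lambda parameter vectors θ = (θ_1,θ_2,θ_3) and θ̃ = (θ̃_1,θ̃_2,θ̃_3), with θ_1,θ̃_1 ∈ ℝ, θ_2,θ̃_2 > 0, θ_3,θ̃_3 < 1 and θ_3,θ̃_3 ≠ 0, satisfy Q(τ_k,θ) = Q(τ_k,θ̃) for all k = 1,…,K, then θ = θ̃. -/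
/-!
Let `f = Q(·, θ) - Q(·, θ̃)`. It vanishes at four levels, so by Rolle `f'` vanishes at three
points of `(0,1)`. Since `∂Q/∂τ = θ₂ · u_{θ₃-1}(τ)` with `u_c(x) = x^c + (1-x)^c`, this says that
`u_{θ₃-1} / u_{θ̃₃-1}` takes the value `θ̃₂/θ₂` three times. For distinct negative exponents this
ratio is strictly monotone on each half of `(0,1)` (and symmetric about `1/2`), so it takes every
value at most twice. Hence `θ₃ = θ̃₃`, then `θ₂ = θ̃₂`, and finally `θ₁ = θ̃₁`.
-/

open Real

/-- The Tukey lambda quantile function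
`Q(τ,θ) = θ₁ + θ₂ · (τ^θ₃ − (1−τ)^θ₃)/θ₃` for a parameter vector `θ = (θ₁, θ₂, θ₃)`. -/
noncomputable def tukeyQ (θ : ℝ × ℝ × ℝ) (τ : ℝ) : ℝ :=
  θ.1 + θ.2.1 * ((τ ^ θ.2.2 - (1 - τ) ^ θ.2.2) / θ.2.2)

open Set

noncomputable def rpowSymm (c x : ℝ) : ℝ := x ^ c + (1 - x) ^ c

lemma rpowSymm_pos (c : ℝ) {x : ℝ} (hx : x ∈ Ioo (0 : ℝ) 1) : 0 < rpowSymm c x :=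
  add_pos (rpow_pos_of_pos hx.1 _) (rpow_pos_of_pos (sub_pos.2 hx.2) _)

lemma rpowSymm_one_sub (c x : ℝ) : rpowSymm c (1 - x) = rpowSymm c x := by
  rw [rpowSymm, rpowSymm, sub_sub_cancel, add_comm]

lemma hasDerivAt_one_sub_rpow (c : ℝ) {x : ℝ} (hx : x < 1) :
    HasDerivAt (fun y : ℝ => (1 - y) ^ c) (-(c * (1 - x) ^ (c - 1))) x := by
  simpa using ((hasDerivAt_id x).const_sub 1).rpow_const (p := c) (Or.inl (sub_pos.2 hx).ne')

lemma hasDerivAt_rpowSymm (c : ℝ) {x : ℝ} (hx : x ∈ Ioo (0 : ℝ) 1) :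
    HasDerivAt (rpowSymm c) (c * (x ^ (c - 1) - (1 - x) ^ (c - 1))) x :=
  ((hasDerivAt_rpow_const (Or.inl hx.1.ne')).add
    (hasDerivAt_one_sub_rpow c hx.2)).congr_deriv (by ring)

lemma hasDerivAt_tukeyQ {θ : ℝ × ℝ × ℝ} (hθ3 : θ.2.2 ≠ 0) {x : ℝ} (hx : x ∈ Ioo (0 : ℝ) 1) :
    HasDerivAt (tukeyQ θ) (θ.2.1 * rpowSymm (θ.2.2 - 1) x) x := by
  have h := (((hasDerivAt_rpow_const (p := θ.2.2) (Or.inl hx.1.ne')).sub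
    (hasDerivAt_one_sub_rpow θ.2.2 hx.2)).div_const θ.2.2).const_mul θ.2.1 |>.const_add θ.1
  refine h.congr_deriv ?_
  rw [rpowSymm]
  field_simp
  ring

lemma exists_tukey_density_eq {θ θt : ℝ × ℝ × ℝ} (hθ3 : θ.2.2 ≠ 0) (hθt3 : θt.2.2 ≠ 0)
    {u v : ℝ} (hu : u ∈ Ioo (0 : ℝ) 1) (hv : v ∈ Ioo (0 : ℝ) 1) (huv : u < v)
    (hQu : tukeyQ θ u = tukeyQ θt u) (hQv : tukeyQ θ v = tukeyQ θt v) :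
    ∃ c ∈ Ioo u v, θ.2.1 * rpowSymm (θ.2.2 - 1) c = θt.2.1 * rpowSymm (θt.2.2 - 1) c := by
  have hIcc : Icc u v ⊆ Ioo (0 : ℝ) 1 := Icc_subset_Ioo hu.1 hv.2
  have hder : ∀ x ∈ Icc u v, HasDerivAt (fun y => tukeyQ θ y - tukeyQ θt y)
      (θ.2.1 * rpowSymm (θ.2.2 - 1) x - θt.2.1 * rpowSymm (θt.2.2 - 1) x) x :=
    fun x hx => (hasDerivAt_tukeyQ hθ3 (hIcc hx)).sub (hasDerivAt_tukeyQ hθt3 (hIcc hx))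
  obtain ⟨c, hc, hc0⟩ := exists_hasDerivAt_eq_zero huv
    (fun x hx => (hder x hx).continuousAt.continuousWithinAt)
    (by rw [hQu, hQv, sub_self, sub_self]) (fun x hx => hder x (Ioo_subset_Icc_self hx))
  exact ⟨c, hc, sub_eq_zero.1 hc0⟩

lemma rpow_sub_one_sub_one_mul_lt {t a b : ℝ} (ht : t ∈ Ioo (0 : ℝ) 1) (hab : a < b) :
    (t ^ (b - 1) - 1) * (t ^ a + 1) < (t ^ (a - 1) - 1) * (t ^ b + 1) := by
  have hba : t ^ b < t ^ a := rpow_lt_rpow_of_exponent_gt ht.1 ht.2 hab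
  have hdiff : (t ^ (b - 1) - 1) * (t ^ a + 1) - (t ^ (a - 1) - 1) * (t ^ b + 1)
      = (t ^ b - t ^ a) * (t⁻¹ + 1) := by
    rw [rpow_sub_one ht.1.ne', rpow_sub_one ht.1.ne']
    ring
  have : (t ^ b - t ^ a) * (t⁻¹ + 1) < 0 :=
    mul_neg_of_neg_of_pos (sub_neg.2 hba) (add_pos (inv_pos.2 ht.1) one_pos)
  linarith

lemma mul_rpow_sub_one_sub_one_mul_lt {t a b : ℝ} (ht : t ∈ Ioo (0 : ℝ) 1) (hab : a < b)
    (hb : b < 0) :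
    a * ((t ^ (a - 1) - 1) * (t ^ b + 1)) < b * ((t ^ (b - 1) - 1) * (t ^ a + 1)) := by
  have hpos : 0 < (t ^ (a - 1) - 1) * (t ^ b + 1) := by
    have : 1 < t ^ (a - 1) := one_lt_rpow_of_pos_of_lt_one_of_neg ht.1 ht.2 (by linarith)
    have : 0 < t ^ b := rpow_pos_of_pos ht.1 b
    nlinarith
  calc a * ((t ^ (a - 1) - 1) * (t ^ b + 1))
      < b * ((t ^ (a - 1) - 1) * (t ^ b + 1)) := mul_lt_mul_of_pos_right hab hpos
    _ < b * ((t ^ (b - 1) - 1) * (t ^ a + 1)) :=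
      mul_lt_mul_of_neg_left (rpow_sub_one_sub_one_mul_lt ht hab) hb

/-- The numerator of the derivative of `rpowSymm a / rpowSymm b`. With `t = x / (1 - x) ∈ (0, 1)`
it is `(1 - x)^(a + b - 1)` times the difference of the two sides of
`mul_rpow_sub_one_sub_one_mul_lt`. -/
lemma rpowSymm_div_deriv_numerator_neg {a b x : ℝ} (hab : a < b) (hb : b < 0)
    (hx : x ∈ Ioo (0 : ℝ) (1 / 2)) :
    a * (x ^ (a - 1) - (1 - x) ^ (a - 1)) * rpowSymm b x
      - rpowSymm a x * (b * (x ^ (b - 1) - (1 - x) ^ (b - 1))) < 0 := by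
  set q := 1 - x
  have hq : 0 < q := by simp only [q]; linarith [hx.2]
  set t := x / q
  have ht : t ∈ Ioo (0 : ℝ) 1 :=
    ⟨div_pos hx.1 hq, (div_lt_one hq).2 (by simp only [q]; linarith [hx.2])⟩
  have hx_eq : ∀ c : ℝ, x ^ c = t ^ c * q ^ c := fun c => by
    rw [← mul_rpow ht.1.le hq.le, div_mul_cancel₀ x hq.ne']
  have hq_pow : q ^ a * q ^ (b - 1) = q ^ (a - 1) * q ^ b := by
    rw [← rpow_add hq, ← rpow_add hq]
    congr 1
    ring
  have hscale : 0 < q ^ (a - 1) * q ^ b := by positivity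
  have key := mul_lt_mul_of_pos_left (mul_rpow_sub_one_sub_one_mul_lt ht hab hb) hscale
  simp only [rpowSymm, hx_eq]
  linear_combination key - (b * ((t ^ (b - 1) - 1) * (t ^ a + 1))) * hq_pow

lemma strictAntiOn_rpowSymm_div {a b : ℝ} (hab : a < b) (hb : b < 0) :
    StrictAntiOn (fun x => rpowSymm a x / rpowSymm b x) (Ioc 0 (1 / 2)) := by
  have hsub : Ioc (0 : ℝ) (1 / 2) ⊆ Ioo 0 1 := Ioc_subset_Ioo_right (by norm_num)
  have hder : ∀ x ∈ Ioc (0 : ℝ) (1 / 2), HasDerivAt (fun x => rpowSymm a x / rpowSymm b x)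
      ((a * (x ^ (a - 1) - (1 - x) ^ (a - 1)) * rpowSymm b x
        - rpowSymm a x * (b * (x ^ (b - 1) - (1 - x) ^ (b - 1)))) / rpowSymm b x ^ 2) x :=
    fun x hx => (hasDerivAt_rpowSymm a (hsub hx)).div (hasDerivAt_rpowSymm b (hsub hx))
      (rpowSymm_pos b (hsub hx)).ne'
  refine strictAntiOn_of_deriv_neg (convex_Ioc 0 (1 / 2))
    (fun x hx => (hder x hx).continuousAt.continuousWithinAt) fun x hx => ?_
  rw [interior_Ioc] at hx
  rw [(hder x (Ioo_subset_Ioc_self hx)).deriv]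
  exact div_neg_of_neg_of_pos (rpowSymm_div_deriv_numerator_neg hab hb hx)
    (pow_pos (rpowSymm_pos b (hsub (Ioo_subset_Ioc_self hx))) 2)

lemma strictMonoOn_rpowSymm_div {a b : ℝ} (hab : a < b) (hb : b < 0) :
    StrictMonoOn (fun x => rpowSymm a x / rpowSymm b x) (Ico (1 / 2) 1) := by
  intro x hx y hy hxy
  have hmem : ∀ z ∈ Ico (1 / 2 : ℝ) 1, 1 - z ∈ Ioc (0 : ℝ) (1 / 2) :=
    fun z hz => ⟨by linarith [hz.2], by linarith [hz.1]⟩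
  simpa only [rpowSymm_one_sub] using
    strictAntiOn_rpowSymm_div hab hb (hmem y hy) (hmem x hx) (by linarith)

lemma rpowSymm_div_ne_of_lt_of_lt {a b : ℝ} (hab : a < b) (hb : b < 0) {x₁ x₂ x₃ : ℝ}
    (h₁ : 0 < x₁) (h₁₂ : x₁ < x₂) (h₂₃ : x₂ < x₃) (h₃ : x₃ < 1)
    (h : rpowSymm a x₁ / rpowSymm b x₁ = rpowSymm a x₂ / rpowSymm b x₂) :
    rpowSymm a x₂ / rpowSymm b x₂ ≠ rpowSymm a x₃ / rpowSymm b x₃ := by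
  rcases le_or_gt x₂ (1 / 2) with hx₂ | hx₂
  · exact absurd h (strictAntiOn_rpowSymm_div hab hb ⟨h₁, h₁₂.le.trans hx₂⟩
      ⟨h₁.trans h₁₂, hx₂⟩ h₁₂).ne'
  · exact (strictMonoOn_rpowSymm_div hab hb ⟨hx₂.le, h₂₃.trans h₃⟩
      ⟨hx₂.le.trans h₂₃.le, h₃⟩ h₂₃).ne

lemma eq_of_mul_rpowSymm_eq_of_lt_of_lt {a b c c' : ℝ} (ha : a < 0) (hb : b < 0) (hc : c ≠ 0)
    {x₁ x₂ x₃ : ℝ} (h₁ : 0 < x₁) (h₁₂ : x₁ < x₂) (h₂₃ : x₂ < x₃) (h₃ : x₃ < 1)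
    (e₁ : c * rpowSymm a x₁ = c' * rpowSymm b x₁) (e₂ : c * rpowSymm a x₂ = c' * rpowSymm b x₂)
    (e₃ : c * rpowSymm a x₃ = c' * rpowSymm b x₃) :
    a = b := by
  wlog hab : a < b generalizing a b c c'
  · rcases (not_lt.1 hab).eq_or_lt with heq | hba
    · exact heq.symm
    have hc' : c' ≠ 0 := by
      rintro rfl
      simp [hc, (rpowSymm_pos a ⟨h₁, h₁₂.trans (h₂₃.trans h₃)⟩).ne'] at e₁
    exact (this hb ha hc' e₁.symm e₂.symm e₃.symm hba).symm
  have hratio : ∀ x ∈ Ioo (0 : ℝ) 1, c * rpowSymm a x = c' * rpowSymm b x →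
      rpowSymm a x / rpowSymm b x = c' / c := fun x hx he => by
    rw [div_eq_div_iff (rpowSymm_pos b hx).ne' hc]
    linarith
  have hx₂ : x₂ ∈ Ioo (0 : ℝ) 1 := ⟨h₁.trans h₁₂, h₂₃.trans h₃⟩
  exact absurd ((hratio x₂ hx₂ e₂).trans (hratio x₃ ⟨hx₂.1.trans h₂₃, h₃⟩ e₃).symm)
    (rpowSymm_div_ne_of_lt_of_lt hab hb h₁ h₁₂ h₂₃ h₃
      ((hratio x₁ ⟨h₁, h₁₂.trans hx₂.2⟩ e₁).trans (hratio x₂ hx₂ e₂).symm))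

theorem tukey_identification_four_levels_general
    (K : ℕ) (hK : 4 ≤ K) (τ : Fin K → ℝ) (hτmono : StrictMono τ)
    (hτ : ∀ k, τ k ∈ Set.Ioo (0 : ℝ) 1)
    (θ θt : ℝ × ℝ × ℝ)
    (hθ2 : 0 < θ.2.1)
    (hθ3lt : θ.2.2 < 1) (hθt3lt : θt.2.2 < 1)
    (hθ3ne : θ.2.2 ≠ 0) (hθt3ne : θt.2.2 ≠ 0)
    (heq : ∀ k, tukeyQ θ (τ k) = tukeyQ θt (τ k)) :
    θ = θt := by
  have hσ : StrictMono (τ ∘ Fin.castLE hK) := hτmono.comp (Fin.strictMono_castLE hK)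
  have hdensity (i j : Fin 4) (hij : i < j) := exists_tukey_density_eq hθ3ne hθt3ne
    (hτ _) (hτ _) (hσ hij) (heq (Fin.castLE hK i)) (heq (Fin.castLE hK j))
  obtain ⟨x₁, hx₁, e₁⟩ := hdensity 0 1 (by decide)
  obtain ⟨x₂, hx₂, e₂⟩ := hdensity 1 2 (by decide)
  obtain ⟨x₃, hx₃, e₃⟩ := hdensity 2 3 (by decide)
  have hshape : θ.2.2 - 1 = θt.2.2 - 1 :=
    eq_of_mul_rpowSymm_eq_of_lt_of_lt (by linarith) (by linarith) hθ2.ne'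
      ((hτ _).1.trans hx₁.1) (hx₁.2.trans hx₂.1) (hx₂.2.trans hx₃.1) (hx₃.2.trans (hτ _).2)
      e₁ e₂ e₃
  have hθ3 : θ.2.2 = θt.2.2 := sub_left_injective hshape
  have hscale : θ.2.1 = θt.2.1 := by
    rw [hshape] at e₁
    exact mul_right_cancel₀ (rpowSymm_pos _ ⟨(hτ _).1.trans hx₁.1, hx₁.2.trans (hτ _).2⟩).ne' e₁
  have hloc : θ.1 = θt.1 := by
    have h := heq (Fin.castLE hK 0)
    rw [tukeyQ, tukeyQ, hθ3, hscale] at h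
    exact add_right_cancel h
  exact Prod.ext hloc (Prod.ext hscale hθ3)

/-- `K ≥ 4` distinct quantile levels in `(0,1)` identify the Tukey lambda
parameters: if two admissible parameter vectors give the same quantiles at all `K` levels,
they are equal. -/
theorem tukey_identification_four_levels
    (K : ℕ) (hK : 4 ≤ K) (τ : Fin K → ℝ) (hτmono : StrictMono τ)
    (hτ : ∀ k, τ k ∈ Set.Ioo (0 : ℝ) 1)
    (θ θt : ℝ × ℝ × ℝ)
    (hθ2 : 0 < θ.2.1) (hθt2 : 0 < θt.2.1)
    (hθ3lt : θ.2.2 < 1) (hθt3lt : θt.2.2 < 1)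
    (hθ3ne : θ.2.2 ≠ 0) (hθt3ne : θt.2.2 ≠ 0)
    (heq : ∀ k, tukeyQ θ (τ k) = tukeyQ θt (τ k)) :
    θ = θt :=
  tukey_identification_four_levels_general K hK τ hτmono hτ θ θt hθ2 hθ3lt hθt3lt hθ3ne hθt3ne heq
end

section
/- Two quantile levels do not identify the Tukey lambda parameters on one side of the median: for any two distinct levels τ_1, τ_2 ∈ (0.5,1), there exist two distinct parameter vectors θ = (θ_1,θ_2,θ_3) ≠ θ̃ = (θ̃_1,θ̃_2,θ̃_3), with θ_1,θ̃_1 ∈ ℝ, θ_2,θ̃_2 > 0, θ_3,θ̃_3 < 1 and θ_3,θ̃_3 ≠ 0, such that Q(τ_k,θ) = Q(τ_k,θ̃) for k = 1,2. -/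
open Real

noncomputable def gA (τ : ℝ) : ℝ := (τ ^ (2⁻¹ : ℝ) - (1 - τ) ^ (2⁻¹ : ℝ)) / (2⁻¹ : ℝ)

noncomputable def gB (τ : ℝ) : ℝ := (τ ^ (-1 : ℝ) - (1 - τ) ^ (-1 : ℝ)) / (-1 : ℝ)

lemma gA_mono {x y : ℝ} (hx : 0 < x) (hy : y < 1) (hxy : x < y) : gA x < gA y := by
  unfold gA
  have h1 : x ^ (2⁻¹ : ℝ) < y ^ (2⁻¹ : ℝ) :=
    Real.rpow_lt_rpow hx.le hxy (by norm_num)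
  have h2 : (1 - y) ^ (2⁻¹ : ℝ) < (1 - x) ^ (2⁻¹ : ℝ) :=
    Real.rpow_lt_rpow (by linarith) (by linarith) (by norm_num)
  rw [div_lt_div_iff₀ (by norm_num) (by norm_num)]
  nlinarith

lemma gB_mono {x y : ℝ} (hx : 0 < x) (hy : y < 1) (hxy : x < y) : gB x < gB y := by
  unfold gB
  rw [Real.rpow_neg_one, Real.rpow_neg_one, Real.rpow_neg_one, Real.rpow_neg_one]
  have h1 : y⁻¹ < x⁻¹ := by
    rw [inv_lt_inv₀ (by linarith) hx]; exact hxy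
  have h2 : (1 - x)⁻¹ < (1 - y)⁻¹ := by
    rw [inv_lt_inv₀ (by linarith) (by linarith)]; linarith
  have e : ∀ a : ℝ, a / (-1 : ℝ) = -a := fun a => by ring
  rw [e, e]; linarith

lemma key {x y : ℝ} (hx : x ∈ Set.Ioo (1 / 2 : ℝ) 1) (hy : y ∈ Set.Ioo (1 / 2 : ℝ) 1)
    (hxy : x < y) :
    ∃ θ θt : ℝ × ℝ × ℝ, θ ≠ θt ∧
      0 < θ.2.1 ∧ 0 < θt.2.1 ∧
      θ.2.2 < 1 ∧ θt.2.2 < 1 ∧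
      θ.2.2 ≠ 0 ∧ θt.2.2 ≠ 0 ∧
      tukeyQ θ x = tukeyQ θt x ∧ tukeyQ θ y = tukeyQ θt y := by
  obtain ⟨hx1, hx2⟩ := hx
  obtain ⟨hy1, hy2⟩ := hy
  have hA : gA x < gA y := gA_mono (by linarith) hy2 hxy
  have hB : gB x < gB y := gB_mono (by linarith) hy2 hxy
  set r : ℝ := (gA y - gA x) / (gB y - gB x) with hr
  have hrpos : 0 < r := div_pos (by linarith) (by linarith)
  set t1 : ℝ := gA x - r * gB x with ht1
  refine ⟨(0, 1, 2⁻¹), (t1, r, -1), ?_, by norm_num, hrpos, by norm_num, by norm_num,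
    by norm_num, by norm_num, ?_, ?_⟩
  · intro h
    have := congrArg (fun p : ℝ × ℝ × ℝ => p.2.2) h
    norm_num at this
  · show 0 + 1 * ((x ^ (2⁻¹:ℝ) - (1-x) ^ (2⁻¹:ℝ)) / (2⁻¹:ℝ))
      = t1 + r * ((x ^ (-1:ℝ) - (1-x) ^ (-1:ℝ)) / (-1:ℝ))
    have : gA x = t1 + r * gB x := by rw [ht1]; ring
    simpa [gA, gB] using this
  · show 0 + 1 * ((y ^ (2⁻¹:ℝ) - (1-y) ^ (2⁻¹:ℝ)) / (2⁻¹:ℝ))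
      = t1 + r * ((y ^ (-1:ℝ) - (1-y) ^ (-1:ℝ)) / (-1:ℝ))
    have hc : r * (gB y - gB x) = gA y - gA x := by
      rw [hr, div_mul_cancel₀ _ (ne_of_gt (by linarith : (0:ℝ) < gB y - gB x))]
    have : gA y = t1 + r * gB y := by rw [ht1]; nlinarith [hc]
    simpa [gA, gB] using this

/-- two quantile levels do not identify the Tukey lambda parameters on one side
of the median: for any two distinct levels `τ₁, τ₂ ∈ (0.5, 1)`, there are two distinct
admissible parameter vectors giving the same quantiles at both levels. -/
theorem tukey_two_levels_not_identified
    (τ1 τ2 : ℝ) (h1 : τ1 ∈ Set.Ioo (1 / 2 : ℝ) 1) (h2 : τ2 ∈ Set.Ioo (1 / 2 : ℝ) 1)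
    (hne : τ1 ≠ τ2) :
    ∃ θ θt : ℝ × ℝ × ℝ, θ ≠ θt ∧
      0 < θ.2.1 ∧ 0 < θt.2.1 ∧
      θ.2.2 < 1 ∧ θt.2.2 < 1 ∧
      θ.2.2 ≠ 0 ∧ θt.2.2 ≠ 0 ∧
      tukeyQ θ τ1 = tukeyQ θt τ1 ∧ tukeyQ θ τ2 = tukeyQ θt τ2 := by
  rcases hne.lt_or_gt with h | h
  · exact key h1 h2 h
  · obtain ⟨θ, θt, hne', ha, hb, hc, hd, he, hf, hq2, hq1⟩ := key h2 h1 h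
    exact ⟨θ, θt, hne', ha, hb, hc, hd, he, hf, hq1, hq2⟩
end

section
/- Let θ < θ̃ < 0. Then the function G(τ) = (τ^{θ̃−1} + (1−τ)^{θ̃−1})/(τ^{θ−1} + (1−τ)^{θ−1}) is strictly decreasing on the interval (1/2, 1). -/
open Real

/-- The function `G(τ) = (τ^{θ̃−1} + (1−τ)^{θ̃−1}) / (τ^{θ−1} + (1−τ)^{θ−1})`. -/
noncomputable def Gfun (θ θt : ℝ) (τ : ℝ) : ℝ :=
  (τ ^ (θt - 1) + (1 - τ) ^ (θt - 1)) / (τ ^ (θ - 1) + (1 - τ) ^ (θ - 1))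

/-!
Write `G = f_b / f_d` with `f_p(τ) = τ^p + (1-τ)^p`, `b = θ̃ - 1`, `d = θ - 1`, so `d < b < 0`.
Then `G' < 0` amounts to `f_b'/f_b < f_d'/f_d`. With `x = τ/(1-τ) > 1` the logarithmic
derivative is `f_p'/f_p = ψ_x(p)/τ`, where `ψ_x(p) = -p · (x - x^p)/(1 + x^p)`. On `p < 0`
both factors of `ψ_x` are positive and decrease in `p`, the first one strictly.
-/

open Set

lemma antitone_sub_rpow_div_one_add_rpow {x : ℝ} (hx : 1 < x) :
    Antitone fun p : ℝ => (x - x ^ p) / (1 + x ^ p) := by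
  intro p q hpq
  have hp : 0 < x ^ p := rpow_pos_of_pos (by linarith) p
  have hq : 0 < x ^ q := rpow_pos_of_pos (by linarith) q
  have hpq' : x ^ p ≤ x ^ q := rpow_le_rpow_of_exponent_le hx.le hpq
  rw [div_le_div_iff₀ (by linarith) (by linarith)]
  nlinarith

lemma strictAntiOn_neg_mul_sub_rpow_div_one_add_rpow {x : ℝ} (hx : 1 < x) :
    StrictAntiOn (fun p : ℝ => -p * ((x - x ^ p) / (1 + x ^ p))) (Iio 0) := by
  intro d hd b hb hdb
  have hxb : x ^ b < x := by
    simpa using rpow_lt_rpow_of_exponent_lt hx (show b < 1 by linarith [mem_Iio.mp hb])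
  have hpos : 0 < (x - x ^ b) / (1 + x ^ b) :=
    div_pos (by linarith) (by linarith [rpow_pos_of_pos (zero_lt_one.trans hx) b])
  calc -b * ((x - x ^ b) / (1 + x ^ b))
      < -d * ((x - x ^ b) / (1 + x ^ b)) := mul_lt_mul_of_pos_right (by linarith) hpos
    _ ≤ -d * ((x - x ^ d) / (1 + x ^ d)) :=
        mul_le_mul_of_nonneg_left (antitone_sub_rpow_div_one_add_rpow hx hdb.le)
          (by linarith [mem_Iio.mp hd])

lemma mul_sub_rpow_div_add_rpow_eq {a c : ℝ} (ha : 0 < a) (hc : 0 < c) (p : ℝ) :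
    p * (a ^ (p - 1) - c ^ (p - 1)) / (a ^ p + c ^ p)
      = -p * ((a / c - (a / c) ^ p) / (1 + (a / c) ^ p)) / a := by
  have hap := rpow_pos_of_pos ha p
  have hcp := rpow_pos_of_pos hc p
  rw [div_rpow ha.le hc.le, rpow_sub_one ha.ne', rpow_sub_one hc.ne']
  field_simp
  ring

noncomputable def powSum (p τ : ℝ) : ℝ := τ ^ p + (1 - τ) ^ p

lemma powSum_pos (p : ℝ) {τ : ℝ} (h0 : 0 < τ) (h1 : τ < 1) : 0 < powSum p τ :=
  add_pos (rpow_pos_of_pos h0 p) (rpow_pos_of_pos (by linarith) p)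

lemma hasDerivAt_powSum (p : ℝ) {τ : ℝ} (h0 : 0 < τ) (h1 : τ < 1) :
    HasDerivAt (powSum p) (p * (τ ^ (p - 1) - (1 - τ) ^ (p - 1))) τ := by
  have hτ : HasDerivAt (fun t : ℝ => t ^ p) (p * τ ^ (p - 1)) τ :=
    hasDerivAt_rpow_const (Or.inl h0.ne')
  have h1τ : HasDerivAt (fun t : ℝ => (1 - t) ^ p) (p * (1 - τ) ^ (p - 1) * -1) τ :=
    (hasDerivAt_rpow_const (Or.inl (by linarith))).comp τ ((hasDerivAt_id τ).const_sub 1)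
  exact (hτ.add h1τ).congr_deriv (by ring)

lemma powSum_logDeriv_lt {b d τ : ℝ} (hdb : d < b) (hb : b < 0) (hτ : 1 / 2 < τ)
    (hτ1 : τ < 1) :
    b * (τ ^ (b - 1) - (1 - τ) ^ (b - 1)) / powSum b τ
      < d * (τ ^ (d - 1) - (1 - τ) ^ (d - 1)) / powSum d τ := by
  have h0 : 0 < τ := by linarith
  have hc : 0 < 1 - τ := by linarith
  have hx : 1 < τ / (1 - τ) := by rw [one_lt_div hc]; linarith
  rw [powSum, powSum, mul_sub_rpow_div_add_rpow_eq h0 hc, mul_sub_rpow_div_add_rpow_eq h0 hc]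
  exact div_lt_div_of_pos_right
    (strictAntiOn_neg_mul_sub_rpow_div_one_add_rpow hx (hdb.trans hb) hb hdb) h0

theorem strictAntiOn_powSum_div_powSum {b d : ℝ} (hdb : d < b) (hb : b < 0) :
    StrictAntiOn (powSum b / powSum d) (Ioo (1 / 2) 1) := by
  have hderiv {τ : ℝ} (hτ : τ ∈ Ioo (1 / 2 : ℝ) 1) :=
    (hasDerivAt_powSum b (by linarith [hτ.1]) hτ.2).div
      (hasDerivAt_powSum d (by linarith [hτ.1]) hτ.2) (powSum_pos d (by linarith [hτ.1]) hτ.2).ne'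
  refine strictAntiOn_of_deriv_neg (convex_Ioo _ _)
    (fun τ hτ => (hderiv hτ).continuousAt.continuousWithinAt) (fun τ hτ => ?_)
  rw [interior_Ioo] at hτ
  obtain ⟨hτ0, hτ1⟩ := hτ
  have h0 : 0 < τ := by linarith
  have hlog := powSum_logDeriv_lt hdb hb hτ0 hτ1
  rw [div_lt_div_iff₀ (powSum_pos b h0 hτ1) (powSum_pos d h0 hτ1)] at hlog
  rw [(hderiv ⟨hτ0, hτ1⟩).deriv]
  exact div_neg_of_neg_of_pos (by linarith) (pow_pos (powSum_pos d h0 hτ1) 2)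

/-- for `θ < θ̃ < 0`, the function `G` is strictly decreasing on `(1/2, 1)`. -/
theorem Gfun_strictAntiOn (θ θt : ℝ) (hθ : θ < θt) (hθt : θt < 0) :
    StrictAntiOn (Gfun θ θt) (Set.Ioo (1 / 2 : ℝ) 1) :=
  strictAntiOn_powSum_div_powSum (by linarith) (by linarith)
end

section
/- Let θ < θ̃ < 0. Then the function G(τ) = (τ^{θ̃−1} + (1−τ)^{θ̃−1})/(τ^{θ−1} + (1−τ)^{θ−1}) is strictly increasing on the interval (0, 1/2). -/
/-!
`G` is the quotient of `h_c(τ) = τ^c + (1-τ)^c` for `c = θ̃ - 1` and `c = θ - 1`, so it increases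
where the logarithmic derivative of `h_{θ̃-1}` exceeds that of `h_{θ-1}`. Writing `1 - τ = r τ`
with `r > 1` on `(0, 1/2)`, one gets `τ (log h_c)' = c (1 - r^(c-1)) / (1 + r^c)`, which is
strictly increasing in `c < 0`.
-/

open Real

theorem strictMonoOn_div_of_logDeriv_lt {f g : ℝ → ℝ} {D : Set ℝ} (hD : Convex ℝ D)
    (hDo : IsOpen D) (hf : ∀ x ∈ D, DifferentiableAt ℝ f x)
    (hg : ∀ x ∈ D, DifferentiableAt ℝ g x) (hf0 : ∀ x ∈ D, 0 < f x) (hg0 : ∀ x ∈ D, 0 < g x)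
    (hlt : ∀ x ∈ D, logDeriv g x < logDeriv f x) :
    StrictMonoOn (fun x => f x / g x) D := by
  refine strictMonoOn_of_deriv_pos hD (fun x hx => ((hf x hx).div (hg x hx)
    (hg0 x hx).ne').continuousAt.continuousWithinAt) fun x hx => ?_
  rw [hDo.interior_eq] at hx
  have hq : 0 < f x / g x := div_pos (hf0 x hx) (hg0 x hx)
  have hderiv : deriv (fun x => f x / g x) x = logDeriv (fun x => f x / g x) x * (f x / g x) :=
    (div_mul_cancel₀ _ hq.ne').symm
  rw [hderiv, logDeriv_div x (hf0 x hx).ne' (hg0 x hx).ne' (hf x hx) (hg x hx)]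
  exact mul_pos (sub_pos.mpr (hlt x hx)) hq

noncomputable def symmRpowSum (c x : ℝ) : ℝ := x ^ c + (1 - x) ^ c

theorem symmRpowSum_pos (c : ℝ) {x : ℝ} (hx0 : 0 < x) (hx1 : x < 1) : 0 < symmRpowSum c x := by
  have : 0 < 1 - x := by linarith
  unfold symmRpowSum
  positivity

theorem hasDerivAt_symmRpowSum (c : ℝ) {x : ℝ} (hx0 : x ≠ 0) (hx1 : x ≠ 1) :
    HasDerivAt (symmRpowSum c) (c * (x ^ (c - 1) - (1 - x) ^ (c - 1))) x := by
  have hsub : HasDerivAt (fun τ : ℝ => (1 - τ) ^ c) (-1 * c * (1 - x) ^ (c - 1)) x := by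
    simpa using ((hasDerivAt_id x).const_sub 1).rpow_const (p := c)
      (Or.inl (sub_ne_zero.mpr hx1.symm))
  exact ((hasDerivAt_rpow_const (Or.inl hx0)).add hsub).congr_deriv (by ring)

theorem logDeriv_symmRpowSum (c : ℝ) {x : ℝ} (hx0 : x ≠ 0) (hx1 : x ≠ 1) :
    logDeriv (symmRpowSum c) x = c * (x ^ (c - 1) - (1 - x) ^ (c - 1)) / symmRpowSum c x := by
  rw [logDeriv_apply, (hasDerivAt_symmRpowSum c hx0 hx1).deriv]

theorem mul_rpow_sub_div_rpow_add_eq (c : ℝ) {x r : ℝ} (hx : 0 < x) (hr : 0 < r) :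
    c * (x ^ (c - 1) - (r * x) ^ (c - 1)) / (x ^ c + (r * x) ^ c)
      = c * (1 - r ^ (c - 1)) / (1 + r ^ c) / x := by
  have hxc : x ^ c = x ^ (c - 1) * x := by
    rw [rpow_sub hx, rpow_one, div_mul_cancel₀ _ hx.ne']
  rw [mul_rpow hr.le hx.le, mul_rpow hr.le hx.le, hxc]
  have : 0 < x ^ (c - 1) := rpow_pos_of_pos hx _
  field_simp

/- The three factors `-c`, `1 - r^(c-1)` and `(1 + r^c)⁻¹` are positive and decrease in `c < 0`. -/
theorem mul_one_sub_rpow_div_one_add_rpow_lt {r a b : ℝ} (hr : 1 < r) (hba : b < a)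
    (ha : a < 0) : b * (1 - r ^ (b - 1)) / (1 + r ^ b) < a * (1 - r ^ (a - 1)) / (1 + r ^ a) := by
  have hpa : 0 < 1 - r ^ (a - 1) := sub_pos.mpr (rpow_lt_one_of_one_lt_of_neg hr (by linarith))
  have hpab : 1 - r ^ (a - 1) < 1 - r ^ (b - 1) := by
    gcongr 1 - ?_
    exact rpow_lt_rpow_of_exponent_lt hr (by linarith)
  have hqba : 1 + r ^ b < 1 + r ^ a := by
    gcongr 1 + ?_
    exact rpow_lt_rpow_of_exponent_lt hr hba
  rw [← neg_lt_neg_iff, ← neg_div, ← neg_div, ← neg_mul, ← neg_mul]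
  calc -a * (1 - r ^ (a - 1)) / (1 + r ^ a)
      < -b * (1 - r ^ (a - 1)) / (1 + r ^ a) := by gcongr
    _ < -b * (1 - r ^ (b - 1)) / (1 + r ^ a) := by gcongr; linarith
    _ < -b * (1 - r ^ (b - 1)) / (1 + r ^ b) := by
        gcongr
        exact mul_pos (by linarith) (by linarith)

theorem logDeriv_symmRpowSum_lt {a b x : ℝ} (hba : b < a) (ha : a < 0) (hx0 : 0 < x)
    (hx : x < 1 / 2) : logDeriv (symmRpowSum b) x < logDeriv (symmRpowSum a) x := by
  have hr : 1 < (1 - x) / x := (one_lt_div hx0).mpr (by linarith)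
  have hrx : 1 - x = (1 - x) / x * x := (div_mul_cancel₀ _ hx0.ne').symm
  have hx1 : x ≠ 1 := by linarith
  rw [logDeriv_symmRpowSum a hx0.ne' hx1, logDeriv_symmRpowSum b hx0.ne' hx1, symmRpowSum,
    symmRpowSum, hrx, mul_rpow_sub_div_rpow_add_eq a hx0 (by linarith),
    mul_rpow_sub_div_rpow_add_eq b hx0 (by linarith)]
  exact div_lt_div_of_pos_right (mul_one_sub_rpow_div_one_add_rpow_lt hr hba ha) hx0

/-- for `θ < θ̃ < 0`, the function `G` is strictly increasing on `(0, 1/2)`. -/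
theorem Gfun_strictMonoOn (θ θt : ℝ) (hθ : θ < θt) (hθt : θt < 0) :
    StrictMonoOn (Gfun θ θt) (Set.Ioo (0 : ℝ) (1 / 2)) := by
  have hdiff : ∀ c, ∀ x ∈ Set.Ioo (0 : ℝ) (1 / 2), DifferentiableAt ℝ (symmRpowSum c) x :=
    fun c x hx => (hasDerivAt_symmRpowSum c hx.1.ne' (by linarith [hx.2])).differentiableAt
  have hpos : ∀ c, ∀ x ∈ Set.Ioo (0 : ℝ) (1 / 2), 0 < symmRpowSum c x :=
    fun c x hx => symmRpowSum_pos c hx.1 (by linarith [hx.2])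
  exact strictMonoOn_div_of_logDeriv_lt (convex_Ioo _ _) isOpen_Ioo (hdiff _) (hdiff _)
    (hpos _) (hpos _) fun x hx => logDeriv_symmRpowSum_lt (by linarith) (by linarith) hx.1 hx.2
end
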